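/- Let M be a saturated class of monomorphisms of simplicial sets satisfying the right cancellation property within monomorphisms. If M contains all spine inclusions Sp(n) → Δⁿ (where Sp(n) = Δ^{0,1} ∪ Δ^{1,2} ∪ ... ∪ Δ^{n-1,n}), then M contains all inner anodyne maps. -/

import Mathlib

/-!
Together with the inner horns, the generalized inner horns `Λⁿ_S ⊆ Δ[n]` are shown to lie in `M`
by strong induction on `n`: `Λⁿ_S` is the union of the faces opposite the vertices outside a
nonempty set `S` of inner vertices, so that `Λⁿ_{i} = Λ[n, i]`.

Subcomplexes of `Δ[n]` are encoded by lower sets of vertex sets. Attaching a face `Δ^R` to a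
subcomplex meeting it in a generalized inner horn of `Δ^R` is a pushout of a generalized inner
horn inclusion of lower dimension, and two filtrations consist of such steps:
* Let `W_k ⊆ Δ[n]` consist of the simplices whose vertices span at most `k` consecutive steps,
  so that `W_1 = Sp(n)` and `W_{n-1} = Λⁿ_{inner}`. Then `W_{k+1}` arises from `W_k` by attaching
  the simplices `Δ^{a, …, a+k+1}` one after another, each along `Λ^{k+1}_{inner}`.
* For `i ∈ S`, attaching the face opposite `j ∈ S \ {i}` turns `Λⁿ_S` into `Λⁿ_{S \ {j}}`, so
  that `Λⁿ_S ⊆ Λⁿ_{i}` lies in `M`.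
Hence `Sp(n) ⊆ Λ[n, i]` lies in `M`, and right cancellation against `Sp(n) ⊆ Δ[n]` gives
`Λ[n, i] ⊆ Δ[n]`. Identities and composites lie in `M` as transfinite compositions indexed by
`Fin 1` and `Fin 3`.
-/

open CategoryTheory Limits Simplicial

universe v u

namespace Paper

variable {C : Type u} [Category.{v} C]

/-- The cocone over the restriction of `F : J ⥤ C` to `Set.Iio m`, with point `F.obj m`;
requiring this to be a colimit cocone at limit elements `m` expresses that `F` is a
transfinite sequence (continuous at limit stages). -/
def coconeAt {J : Type v} [Preorder J] (F : J ⥤ C) (m : J) :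
    Cocone ((Monotone.functor (f := (Subtype.val : Set.Iio m → J))
      (fun _ _ h => h)) ⋙ F) where
  pt := F.obj m
  ι :=
    { app := fun j => F.map (homOfLE j.2.le)
      naturality := fun j k h => by
        dsimp
        rw [Category.comp_id, ← F.map_comp]
        rfl }

/-- A class of morphisms is (weakly) saturated if it is closed under
pushouts (cobase change), retracts, and transfinite composition. -/
structure IsSaturated (W : MorphismProperty C) : Prop where
  /-- closure under cobase change (pushouts) -/
  cobase : W.IsStableUnderCobaseChange
  /-- closure under retracts in the arrow category -/
  retract : ∀ {X Y X' Y' : C} (f : X ⟶ Y) (g : X' ⟶ Y')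
      (i : Arrow.mk f ⟶ Arrow.mk g) (r : Arrow.mk g ⟶ Arrow.mk f),
      i ≫ r = 𝟙 _ → W g → W f
  /-- closure under transfinite composition: given a well-ordered diagram which is
  continuous at limit stages and whose successor maps lie in `W`, the transfinite
  composite (the map from the bottom object to the colimit) lies in `W`. -/
  transfinite : ∀ (J : Type v) [LinearOrder J] [OrderBot J] [SuccOrder J] [WellFoundedLT J]
      (F : J ⥤ C) (c : Cocone F), IsColimit c →
      (∀ (m : J), Order.IsSuccLimit m → Nonempty (IsColimit (coconeAt F m))) →
      (∀ j : J, ¬IsMax j → W (F.map (homOfLE (Order.le_succ j)))) →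
      W (c.ι.app ⊥)

/-- The saturated class generated by a class `S` of morphisms: the smallest
saturated class containing `S`. -/
def Saturation (S : MorphismProperty C) : MorphismProperty C :=
  fun _ _ f => ∀ (W : MorphismProperty C), S ≤ W → IsSaturated W → W f

/-- The inner horn inclusions `Λ[n, i] ⟶ Δ[n]` for `0 < i < n`. -/
def InnerHorns : MorphismProperty SSet.{0} := fun X Y f =>
  ∃ (n : ℕ) (i : Fin (n + 1)) (_ : 0 < (i : ℕ)) (_ : (i : ℕ) < n)
    (hX : X = Λ[n, i]) (hY : Y = Δ[n]),
    f = eqToHom hX ≫ Λ[n, i].ι ≫ eqToHom hY.symm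

/-- A map of simplicial sets is inner anodyne if it lies in the saturated class
generated by the inner horn inclusions. -/
def InnerAnodyne : MorphismProperty SSet.{0} := Saturation InnerHorns

/-- The spine `Sp(n) ⊆ Δ[n]`: the union of the consecutive edges
`Δ^{0,1} ∪ Δ^{1,2} ∪ ⋯ ∪ Δ^{n-1,n}`. An `m`-simplex of `Δ[n]` lies in the spine iff,
as a monotone map `[m] → [n]`, its image is contained in some `{i, i+1}` (or `{i}`). -/
def spine (n : ℕ) : SSet.{0} where
  obj m := { α : Δ[n].obj m //
    ∃ i : Fin (n + 1), ∀ k, ((SSet.stdSimplex.asOrderHom α) k : ℕ) = i ∨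
      ((SSet.stdSimplex.asOrderHom α) k : ℕ) = i + 1 }
  map {m₁ m₂} f := TypeCat.ofHom fun α =>
    ⟨Δ[n].map f α.1, by
      obtain ⟨i, hi⟩ := α.2
      exact ⟨i, fun k => hi _⟩⟩

/-- The spine inclusion `Sp(n) ⟶ Δ[n]`. -/
def spineInclusion (n : ℕ) : spine n ⟶ Δ[n] where
  app m := TypeCat.ofHom fun α => α.1

end Paper

namespace Paper

open SSet

section Saturated

variable {C : Type u} [Category.{0} C] {W : MorphismProperty C}

lemma IsSaturated.map_bot_top_mem (hW : IsSaturated W) {n : ℕ} (F : Fin (n + 1) ⥤ C)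
    (hF : ∀ j : Fin (n + 1), ¬IsMax j → W (F.map (homOfLE (Order.le_succ j)))) :
    W (F.map (homOfLE bot_le : ⊥ ⟶ ⊤)) :=
  hW.transfinite _ F _ (colimitOfDiagramTerminal isTerminalTop F)
    (fun _ hm => absurd hm Order.not_isSuccLimit_of_isSuccArchimedean) hF

lemma IsSaturated.isMultiplicative (hW : IsSaturated W) : W.IsMultiplicative where
  id_mem X := hW.map_bot_top_mem (ComposableArrows.mk₀ X)
    (fun j hj => by fin_cases j; exact absurd isMax_top hj)
  comp_mem f g hf hg := hW.map_bot_top_mem (ComposableArrows.mk₂ f g) (by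
    intro j hj
    fin_cases j
    · exact hf
    · exact hg
    · exact absurd isMax_top hj)

lemma IsSaturated.saturation_le (hW : IsSaturated W) {S : MorphismProperty C} (hS : S ≤ W) :
    Saturation S ≤ W :=
  fun _ _ _ hf => hf W hS hW

end Saturated

section Inclusions

def InclusionIn (W : MorphismProperty SSet.{0}) {X : SSet.{0}} (A B : X.Subcomplex) : Prop :=
  ∃ h : A ≤ B, W (Subcomplex.homOfLE h)

variable {W : MorphismProperty SSet.{0}} {X : SSet.{0}}

lemma InclusionIn.refl [W.ContainsIdentities] (A : X.Subcomplex) : InclusionIn W A A :=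
  ⟨le_rfl, W.id_mem _⟩

lemma InclusionIn.trans [W.IsStableUnderComposition] {A B C : X.Subcomplex}
    (h₁ : InclusionIn W A B) (h₂ : InclusionIn W B C) : InclusionIn W A C :=
  ⟨h₁.1.trans h₂.1, W.comp_mem _ _ h₁.2 h₂.2⟩

lemma InclusionIn.sup_of_inf [W.IsStableUnderCobaseChange] {A B : X.Subcomplex}
    (h : InclusionIn W (A ⊓ B) A) : InclusionIn W B (A ⊔ B) :=
  ⟨le_sup_right, W.of_isPushout (Subcomplex.BicartSq.isPushout ⟨rfl, rfl⟩).flip h.2⟩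

lemma inclusionIn_top_iff [W.RespectsIso] (A : X.Subcomplex) :
    InclusionIn W A ⊤ ↔ W A.ι := by
  rw [← Subcomplex.homOfLE_ι (le_top : A ≤ ⊤), ← Subcomplex.topIso_hom,
    W.cancel_right_of_respectsIso]
  exact ⟨fun h => h.2, fun h => ⟨le_top, h⟩⟩

end Inclusions

section Faces

variable {n k : ℕ}

def subcomplexOfFaces (𝒮 : LowerSet (Set (Fin (n + 1)))) :
    (Δ[n] : SSet.{0}).Subcomplex where
  obj _ := {α | Set.range (stdSimplex.asOrderHom α) ∈ 𝒮}
  map f α hα := 𝒮.lower (show Set.range (stdSimplex.asOrderHom (Δ[n].map f α)) ⊆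
    Set.range (stdSimplex.asOrderHom α) from fun _ hx => Set.range_comp_subset_range _ _ hx) hα

@[simp]
lemma subcomplexOfFaces_top : subcomplexOfFaces (⊤ : LowerSet (Set (Fin (n + 1)))) = ⊤ := rfl

@[simp]
lemma subcomplexOfFaces_sup (𝒮 𝒯 : LowerSet (Set (Fin (n + 1)))) :
    subcomplexOfFaces (𝒮 ⊔ 𝒯) = subcomplexOfFaces 𝒮 ⊔ subcomplexOfFaces 𝒯 := rfl

@[simp]
lemma subcomplexOfFaces_inf (𝒮 𝒯 : LowerSet (Set (Fin (n + 1)))) :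
    subcomplexOfFaces (𝒮 ⊓ 𝒯) = subcomplexOfFaces 𝒮 ⊓ subcomplexOfFaces 𝒯 := rfl

def pushFaces (e : Fin (k + 1) ↪o Fin (n + 1)) (𝒮 : LowerSet (Set (Fin (k + 1)))) :
    LowerSet (Set (Fin (n + 1))) where
  carrier := {A | A ⊆ Set.range e ∧ e ⁻¹' A ∈ 𝒮}
  lower' _ _ hBA hA := ⟨hBA.trans hA.1, 𝒮.lower (Set.preimage_mono hBA) hA.2⟩

@[simp]
lemma mem_pushFaces {e : Fin (k + 1) ↪o Fin (n + 1)} {𝒮 : LowerSet (Set (Fin (k + 1)))}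
    {A : Set (Fin (n + 1))} : A ∈ pushFaces e 𝒮 ↔ A ⊆ Set.range e ∧ e ⁻¹' A ∈ 𝒮 :=
  Iff.rfl

lemma pushFaces_top (e : Fin (k + 1) ↪o Fin (n + 1)) :
    pushFaces e ⊤ = LowerSet.Iic (Set.range e) := by
  ext A
  simp

lemma stdSimplex.obj_ext {m : SimplexCategoryᵒᵖ} {α β : Δ[n].obj m}
    (h : ∀ t, stdSimplex.asOrderHom α t = stdSimplex.asOrderHom β t) : α = β :=
  stdSimplex.objEquiv.injective (SimplexCategory.Hom.ext _ _ (OrderHom.ext _ _ (funext h)))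

noncomputable def stdSimplex.corestrict (e : Fin (k + 1) ↪o Fin (n + 1))
    {m : SimplexCategoryᵒᵖ} (β : Δ[n].obj m)
    (hβ : Set.range (stdSimplex.asOrderHom β) ⊆ Set.range e) : Δ[k].obj m :=
  stdSimplex.objMk ((OrderHomClass.toOrderHom e.orderIso.symm).comp
    ⟨fun t => ⟨stdSimplex.asOrderHom β t, hβ ⟨t, rfl⟩⟩,
      fun _ _ h => (stdSimplex.asOrderHom β).monotone h⟩)

lemma stdSimplex.apply_corestrict (e : Fin (k + 1) ↪o Fin (n + 1)) {m : SimplexCategoryᵒᵖ}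
    (β : Δ[n].obj m) (hβ : Set.range (stdSimplex.asOrderHom β) ⊆ Set.range e) (t) :
    e (stdSimplex.asOrderHom (stdSimplex.corestrict e β hβ) t) = stdSimplex.asOrderHom β t :=
  Equiv.apply_ofInjective_symm e.injective _

lemma stdSimplex.range_corestrict (e : Fin (k + 1) ↪o Fin (n + 1)) {m : SimplexCategoryᵒᵖ}
    (β : Δ[n].obj m) (hβ : Set.range (stdSimplex.asOrderHom β) ⊆ Set.range e) :
    Set.range (stdSimplex.asOrderHom (stdSimplex.corestrict e β hβ)) =
      e ⁻¹' Set.range (stdSimplex.asOrderHom β) := by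
  ext x
  simp only [Set.mem_range, Set.mem_preimage]
  constructor
  · rintro ⟨t, rfl⟩
    exact ⟨t, (stdSimplex.apply_corestrict e _ _ t).symm⟩
  · rintro ⟨t, ht⟩
    exact ⟨t, e.injective ((stdSimplex.apply_corestrict e _ _ t).trans ht)⟩

noncomputable def pushFacesIso (e : Fin (k + 1) ↪o Fin (n + 1))
    (𝒮 : LowerSet (Set (Fin (k + 1)))) :
    (subcomplexOfFaces 𝒮 : SSet) ≅ subcomplexOfFaces (pushFaces e 𝒮) :=
  NatIso.ofComponents (fun m => Equiv.toIso
    { toFun α := ⟨stdSimplex.objMk (e.toOrderHom.comp (stdSimplex.asOrderHom α.1)), by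
        have hr : Set.range (e.toOrderHom.comp (stdSimplex.asOrderHom α.1)) =
            e '' Set.range (stdSimplex.asOrderHom α.1) := Set.range_comp e _
        refine ⟨hr ▸ Set.image_subset_range _ _, ?_⟩
        change e ⁻¹' Set.range (e.toOrderHom.comp (stdSimplex.asOrderHom α.1)) ∈ 𝒮
        rw [hr, Set.preimage_image_eq _ e.injective]
        exact α.2⟩
      invFun β := ⟨stdSimplex.corestrict e β.1 β.2.1, by
        change _ ∈ 𝒮
        rw [stdSimplex.range_corestrict]
        exact β.2.2⟩
      left_inv α := Subtype.ext (stdSimplex.obj_ext fun t => e.injective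
        (stdSimplex.apply_corestrict e (stdSimplex.objMk (e.toOrderHom.comp
          (stdSimplex.asOrderHom α.1))) (fun _ ⟨s, hs⟩ => ⟨_, hs⟩) t))
      right_inv β := Subtype.ext (stdSimplex.obj_ext fun t =>
        stdSimplex.apply_corestrict e β.1 β.2.1 t) })
    (fun _ => rfl)

variable {W : MorphismProperty SSet.{0}}

lemma InclusionIn.push [W.RespectsIso] (e : Fin (k + 1) ↪o Fin (n + 1))
    {𝒮 𝒯 : LowerSet (Set (Fin (k + 1)))}
    (h : InclusionIn W (subcomplexOfFaces 𝒮) (subcomplexOfFaces 𝒯)) :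
    InclusionIn W (subcomplexOfFaces (pushFaces e 𝒮))
      (subcomplexOfFaces (pushFaces e 𝒯)) := by
  have hle : subcomplexOfFaces (pushFaces e 𝒮) ≤ subcomplexOfFaces (pushFaces e 𝒯) := by
    rintro m β ⟨hβe, hβ⟩
    refine ⟨hβe, ?_⟩
    have := h.1 m ((pushFacesIso e 𝒮).inv.app m ⟨β, hβe, hβ⟩).2
    rwa [← stdSimplex.range_corestrict e β hβe]
  exact ⟨hle, (W.arrow_mk_iso_iff
    (Arrow.isoMk (pushFacesIso e 𝒮) (pushFacesIso e 𝒯) rfl)).mp h.2⟩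

end Faces

section GeneralizedHorns

variable {n k m : ℕ}

def genHorn (S : Set (Fin (n + 1))) : LowerSet (Set (Fin (n + 1))) where
  carrier := {A | ∃ j ∉ S, j ∉ A}
  lower' _ _ hBA := fun ⟨j, hjS, hjA⟩ => ⟨j, hjS, fun h => hjA (hBA h)⟩

@[simp]
lemma mem_genHorn {S A : Set (Fin (n + 1))} : A ∈ genHorn S ↔ ∃ j ∉ S, j ∉ A := Iff.rfl

def innerVertices (n : ℕ) : Set (Fin (n + 1)) := {j | 0 < (j : ℕ) ∧ (j : ℕ) < n}

lemma horn_eq_subcomplexOfFaces (i : Fin (n + 1)) :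
    Λ[n, i] = subcomplexOfFaces (genHorn {i}) := by
  ext m α
  simp [mem_horn_iff, subcomplexOfFaces, genHorn, Set.ne_univ_iff_exists_notMem]

lemma pushFaces_genHorn (e : Fin (k + 1) ↪o Fin (n + 1)) (S : Set (Fin (k + 1))) :
    pushFaces e (genHorn S) =
      LowerSet.Iic (Set.range e) ⊓ genHorn (e '' S ∪ (Set.range e)ᶜ) := by
  ext A
  simp only [SetLike.mem_coe, mem_pushFaces, mem_genHorn, LowerSet.mem_inf_iff,
    LowerSet.mem_Iic_iff]
  refine and_congr_right fun hA => ⟨fun ⟨x, hxS, hxA⟩ => ⟨e x, ?_, hxA⟩, ?_⟩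
  · rintro (⟨y, hy, hyx⟩ | hx)
    · exact hxS (e.injective hyx ▸ hy)
    · exact hx ⟨x, rfl⟩
  · rintro ⟨y, hy, hyA⟩
    rw [Set.mem_union, not_or, Set.notMem_compl_iff] at hy
    obtain ⟨x, rfl⟩ := hy.2
    exact ⟨x, fun hx => hy.1 ⟨x, hx, rfl⟩, hyA⟩

lemma genHorn_sup_Iic_compl_singleton (S : Set (Fin (n + 1))) (j : Fin (n + 1)) :
    LowerSet.Iic {j}ᶜ ⊔ genHorn S = genHorn (S \ {j}) := by
  ext A
  simp only [SetLike.mem_coe, LowerSet.mem_sup_iff, LowerSet.mem_Iic_iff, mem_genHorn,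
    Set.subset_compl_singleton_iff]
  grind

lemma preimage_succAbove_subset_innerVertices {S : Set (Fin (m + 2))}
    (hS : S ⊆ innerVertices (m + 1)) {j : Fin (m + 2)} (hj : j ∈ S) :
    j.succAbove ⁻¹' S ⊆ innerVertices m := by
  intro x hx
  have hx' := hS hx
  have hj' := hS hj
  simp only [innerVertices, Set.mem_ofPred_eq] at hx' hj' ⊢
  rcases lt_or_ge x.castSucc j with h | h
  · rw [Fin.succAbove_of_castSucc_lt _ _ h] at hx'
    rw [Fin.lt_def] at h
    simp only [Fin.val_castSucc] at h hx'
    omega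
  · rw [Fin.succAbove_of_le_castSucc _ _ h] at hx'
    rw [Fin.le_def] at h
    simp only [Fin.val_castSucc, Fin.val_succ] at h hx'
    omega

end GeneralizedHorns

section Attaching

variable {W : MorphismProperty SSet.{0}} {n k m : ℕ}

lemma InclusionIn.sup_Iic_range [W.IsStableUnderCobaseChange] (e : Fin (k + 1) ↪o Fin (n + 1))
    {S : Set (Fin (k + 1))} (hS : InclusionIn W (subcomplexOfFaces (genHorn S)) ⊤)
    {𝒮 : LowerSet (Set (Fin (n + 1)))}
    (h𝒮 : LowerSet.Iic (Set.range e) ⊓ 𝒮 = pushFaces e (genHorn S)) :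
    InclusionIn W (subcomplexOfFaces 𝒮)
      (subcomplexOfFaces (LowerSet.Iic (Set.range e) ⊔ 𝒮)) := by
  have h := hS.push e (𝒯 := ⊤)
  rw [← h𝒮, pushFaces_top, subcomplexOfFaces_inf] at h
  rw [subcomplexOfFaces_sup]
  exact h.sup_of_inf

def GenInnerHornsIn (W : MorphismProperty SSet.{0}) (m : ℕ) : Prop :=
  ∀ S : Set (Fin (m + 1)), S.Nonempty → S ⊆ innerVertices m →
    InclusionIn W (subcomplexOfFaces (genHorn S)) ⊤

lemma inclusionIn_genHorn_diff_singleton [W.IsStableUnderCobaseChange]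
    (hW : GenInnerHornsIn W m) {S : Set (Fin (m + 2))} (hS : S ⊆ innerVertices (m + 1))
    {j : Fin (m + 2)} (hj : j ∈ S) (hne : (S \ {j}).Nonempty) :
    InclusionIn W (subcomplexOfFaces (genHorn S)) (subcomplexOfFaces (genHorn (S \ {j}))) := by
  let e := Fin.succAboveOrderEmb j
  have he : Set.range e = {j}ᶜ := Fin.range_succAboveOrderEmb j
  have hpre : (e ⁻¹' S).Nonempty := by
    obtain ⟨s, hs, hsj⟩ := hne
    obtain ⟨x, rfl⟩ : s ∈ Set.range e := he ▸ hsj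
    exact ⟨x, hs⟩
  have h := InclusionIn.sup_Iic_range e
    (hW _ hpre (preimage_succAbove_subset_innerVertices hS hj)) (𝒮 := genHorn S) (by
      rw [pushFaces_genHorn, Set.image_preimage_eq_inter_range, he, compl_compl, ← Set.sdiff_eq,
        Set.sdiff_union_of_subset (Set.singleton_subset_iff.mpr hj)])
  rwa [he, genHorn_sup_Iic_compl_singleton] at h

lemma inclusionIn_genHorn_singleton [W.IsMultiplicative] [W.IsStableUnderCobaseChange]
    (hW : GenInnerHornsIn W m) {S : Set (Fin (m + 2))} (hS : S ⊆ innerVertices (m + 1))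
    {i : Fin (m + 2)} (hi : i ∈ S) :
    InclusionIn W (subcomplexOfFaces (genHorn S)) (subcomplexOfFaces (genHorn {i})) := by
  suffices ∀ T : Set (Fin (m + 2)), T ⊆ innerVertices (m + 1) → i ∉ T →
      InclusionIn W (subcomplexOfFaces (genHorn (insert i T)))
        (subcomplexOfFaces (genHorn {i})) by
    simpa [Set.insert_sdiff_self_of_mem hi] using
      this (S \ {i}) (Set.sdiff_subset.trans hS) (fun h => h.2 rfl)
  intro T
  induction T, T.toFinite using Set.Finite.induction_on with
  | empty => exact fun _ _ => by simpa using InclusionIn.refl _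
  | @insert a T haT _ ih =>
    intro hT hiT
    have hai : a ≠ i := fun h => hiT (h ▸ Set.mem_insert a T)
    have hstep := inclusionIn_genHorn_diff_singleton hW (j := a)
      (Set.insert_subset (hS hi) hT) (by simp) ⟨i, by simp [hai.symm]⟩
    have hdiff : insert i (insert a T) \ {a} = insert i T := by
      ext x
      by_cases hx : x = a <;> simp [hx, hai, haT]
    rw [hdiff] at hstep
    exact hstep.trans (ih (fun x hx => hT (Set.mem_insert_of_mem a hx))
      (fun h => hiT (Set.mem_insert_of_mem a h)))

lemma genInnerHornsIn_zero : GenInnerHornsIn W 0 := by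
  rintro S ⟨i, hi⟩ hS
  obtain ⟨h₀, h₁⟩ := hS hi
  omega

lemma GenInnerHornsIn.succ [W.IsMultiplicative] [W.IsStableUnderCobaseChange]
    (hW : GenInnerHornsIn W m) (hhorn : ∀ i ∈ innerVertices (m + 1), W Λ[m + 1, i].ι) :
    GenInnerHornsIn W (m + 1) := by
  rintro S ⟨i, hi⟩ hS
  have h := (inclusionIn_top_iff _).mpr (hhorn i (hS hi))
  rw [horn_eq_subcomplexOfFaces] at h
  exact (inclusionIn_genHorn_singleton hW hS hi).trans h

end Attaching

section Spans

variable {W : MorphismProperty SSet.{0}} {n k : ℕ}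

def spanLE (n k : ℕ) : LowerSet (Set (Fin (n + 1))) where
  carrier := {A | ∀ x ∈ A, ∀ y ∈ A, (y : ℕ) ≤ x + k}
  lower' _ _ hBA hA x hx y hy := hA x (hBA hx) y (hBA hy)

@[simp]
lemma mem_spanLE {A : Set (Fin (n + 1))} :
    A ∈ spanLE n k ↔ ∀ x ∈ A, ∀ y ∈ A, (y : ℕ) ≤ x + k := Iff.rfl

lemma spanLE_eq_genHorn (k : ℕ) : spanLE (k + 1) k = genHorn (innerVertices (k + 1)) := by
  ext A
  simp only [SetLike.mem_coe, mem_spanLE, mem_genHorn, innerVertices, Set.mem_ofPred_eq]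
  constructor
  · intro hA
    by_contra! h
    have := hA 0 (h 0 (by simp)) (Fin.last _) (h _ (by simp))
    simp at this
  · rintro ⟨j, hj, hjA⟩ x hx y hy
    have hxj : (x : ℕ) ≠ j := fun h => hjA (Fin.ext h ▸ hx)
    have hyj : (y : ℕ) ≠ j := fun h => hjA (Fin.ext h ▸ hy)
    have := j.isLt
    have := y.isLt
    omega

def vertexInterval (n a w : ℕ) : Set (Fin (n + 1)) :=
  {x | a ≤ (x : ℕ) ∧ (x : ℕ) ≤ a + w}

def intervalEmbedding (a w : ℕ) (h : a + w ≤ n) : Fin (w + 1) ↪o Fin (n + 1) :=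
  OrderEmbedding.ofStrictMono (fun x => ⟨a + x, by omega⟩) fun _ _ hxy =>
    Fin.mk_lt_mk.mpr (Nat.add_lt_add_left hxy a)

lemma range_intervalEmbedding (a w : ℕ) (h : a + w ≤ n) :
    Set.range (intervalEmbedding a w h) = vertexInterval n a w := by
  ext x
  constructor
  · rintro ⟨t, rfl⟩
    exact ⟨Nat.le_add_right _ _, Nat.add_le_add_left (Nat.lt_succ_iff.mp t.isLt) a⟩
  · rintro ⟨h₁, h₂⟩
    exact ⟨⟨x - a, by omega⟩, Fin.ext (Nat.add_sub_cancel' h₁)⟩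

def spanFiltration (n k a : ℕ) : LowerSet (Set (Fin (n + 1))) :=
  match a with
  | 0 => spanLE n k
  | a + 1 => LowerSet.Iic (vertexInterval n a (k + 1)) ⊔ spanFiltration n k a

lemma mem_spanFiltration {a : ℕ} {A : Set (Fin (n + 1))} :
    A ∈ spanFiltration n k a ↔
      A ∈ spanLE n k ∨ ∃ a' < a, A ⊆ vertexInterval n a' (k + 1) := by
  induction a with
  | zero => simp [spanFiltration]
  | succ a ih =>
    simp only [spanFiltration, LowerSet.mem_sup_iff, LowerSet.mem_Iic_iff, ih]
    constructor
    · rintro (h | h | ⟨a', ha', h⟩)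
      · exact Or.inr ⟨a, by omega, h⟩
      · exact Or.inl h
      · exact Or.inr ⟨a', by omega, h⟩
    · rintro (h | ⟨a', ha', h⟩)
      · exact Or.inr (Or.inl h)
      · rcases Nat.lt_succ_iff_lt_or_eq.mp ha' with ha' | rfl
        · exact Or.inr (Or.inr ⟨a', ha', h⟩)
        · exact Or.inl h

lemma Iic_inf_spanFiltration (a : ℕ) (h : a + (k + 1) ≤ n) :
    LowerSet.Iic (Set.range (intervalEmbedding a (k + 1) h)) ⊓ spanFiltration n k a =
      pushFaces (intervalEmbedding a (k + 1) h) (spanLE (k + 1) k) := by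
  ext A
  simp only [SetLike.mem_coe, LowerSet.mem_inf_iff, LowerSet.mem_Iic_iff, mem_pushFaces,
    mem_spanFiltration, range_intervalEmbedding]
  refine and_congr_right fun hA => ?_
  have hAe : A ⊆ Set.range (intervalEmbedding a (k + 1) h) := range_intervalEmbedding a _ h ▸ hA
  have hpre : intervalEmbedding a (k + 1) h ⁻¹' A ∈ spanLE (k + 1) k ↔ A ∈ spanLE n k := by
    constructor
    · intro hA' x hx y hy
      obtain ⟨x, rfl⟩ := hAe hx
      obtain ⟨y, rfl⟩ := hAe hy
      have := hA' x hx y hy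
      change a + (y : ℕ) ≤ a + x + k
      omega
    · intro hA' x hx y hy
      have := hA' _ hx _ hy
      change a + (y : ℕ) ≤ a + x + k at this
      omega
  rw [hpre, or_iff_left_of_imp]
  rintro ⟨a', ha', hA'⟩ x hx y hy
  have := (hA hx).1
  have := (hA' hy).2
  omega

lemma spanFiltration_sub_eq_spanLE_succ (h : k + 1 ≤ n) :
    spanFiltration n k (n - k) = spanLE n (k + 1) := by
  ext A
  simp only [SetLike.mem_coe, mem_spanFiltration]
  constructor
  · rintro (hA | ⟨a', -, hA'⟩) x hx y hy
    · have := hA x hx y hy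
      omega
    · have := (hA' hx).1
      have := (hA' hy).2
      omega
  · intro hA
    by_cases hk : A ∈ spanLE n k
    · exact Or.inl hk
    simp only [mem_spanLE, not_forall, not_le] at hk
    obtain ⟨x₀, hx₀, y₀, hy₀, hxy₀⟩ := hk
    obtain ⟨x, hx, hmin⟩ :=
      Set.exists_min_image A (fun x => (x : ℕ)) A.toFinite ⟨x₀, hx₀⟩
    have := hmin x₀ hx₀
    have := hA x hx y₀ hy₀
    have := y₀.isLt
    exact Or.inr ⟨x, by omega, fun y hy => ⟨hmin y hy, hA x hx y hy⟩⟩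

lemma inclusionIn_spanLE_succ [W.IsMultiplicative] [W.IsStableUnderCobaseChange]
    (hW : GenInnerHornsIn W (k + 1)) (hk : 0 < k) (hkn : k + 1 ≤ n) :
    InclusionIn W (subcomplexOfFaces (spanLE n k)) (subcomplexOfFaces (spanLE n (k + 1))) := by
  have hlocal : InclusionIn W (subcomplexOfFaces (genHorn (innerVertices (k + 1)))) ⊤ :=
    hW _ ⟨⟨1, by omega⟩, by simp [innerVertices]; omega⟩ subset_rfl
  have hstep (a : ℕ) (ha : a + (k + 1) ≤ n) : InclusionIn W
      (subcomplexOfFaces (spanFiltration n k a))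
      (subcomplexOfFaces (spanFiltration n k (a + 1))) := by
    have := hlocal.sup_Iic_range (intervalEmbedding a (k + 1) ha)
      (by rw [← spanLE_eq_genHorn]; exact Iic_inf_spanFiltration a ha)
    rwa [range_intervalEmbedding] at this
  have hchain (a : ℕ) (ha : a ≤ n - k) : InclusionIn W
      (subcomplexOfFaces (spanLE n k)) (subcomplexOfFaces (spanFiltration n k a)) := by
    induction a with
    | zero => exact .refl _
    | succ a ih => exact (ih (by omega)).trans (hstep a (by omega))
  rw [← spanFiltration_sub_eq_spanLE_succ hkn]
  exact hchain _ le_rfl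

lemma inclusionIn_spanLE_one [W.IsMultiplicative] [W.IsStableUnderCobaseChange]
    (hW : ∀ m < n, GenInnerHornsIn W m) {k : ℕ} (hk : 1 ≤ k) (hkn : k < n) :
    InclusionIn W (subcomplexOfFaces (spanLE n 1)) (subcomplexOfFaces (spanLE n k)) := by
  induction k, hk using Nat.le_induction with
  | base => exact .refl _
  | succ k hk ih =>
    exact (ih (by omega)).trans (inclusionIn_spanLE_succ (hW _ hkn) (by omega) (by omega))

end Spans

section Spine

variable {W : MorphismProperty SSet.{0}} {n : ℕ}

lemma exists_consecutive_iff_range_mem_spanLE_one {m : SimplexCategoryᵒᵖ} (α : Δ[n].obj m) :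
    (∃ i : Fin (n + 1), ∀ k, (stdSimplex.asOrderHom α k : ℕ) = i ∨
      (stdSimplex.asOrderHom α k : ℕ) = i + 1) ↔
      Set.range (stdSimplex.asOrderHom α) ∈ spanLE n 1 := by
  constructor
  · rintro ⟨i, hi⟩ _ ⟨x, rfl⟩ _ ⟨y, rfl⟩
    have := hi x
    have := hi y
    omega
  · intro h
    refine ⟨stdSimplex.asOrderHom α 0, fun k => ?_⟩
    have h₁ := h _ ⟨0, rfl⟩ _ ⟨k, rfl⟩
    have h₂ : stdSimplex.asOrderHom α 0 ≤ stdSimplex.asOrderHom α k :=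
      (stdSimplex.asOrderHom α).monotone (Fin.zero_le k)
    rw [Fin.le_def] at h₂
    omega

noncomputable def spineIso (n : ℕ) : spine n ≅ (subcomplexOfFaces (spanLE n 1) : SSet) :=
  NatIso.ofComponents (fun _ => Equiv.toIso
    (Equiv.subtypeEquivRight exists_consecutive_iff_range_mem_spanLE_one)) (fun _ => rfl)

lemma spineInclusion_mem_iff [W.RespectsIso] :
    W (spineInclusion n) ↔ InclusionIn W (subcomplexOfFaces (spanLE n 1)) ⊤ := by
  rw [inclusionIn_top_iff]
  exact W.arrow_mk_iso_iff (Arrow.isoMk (spineIso n) (Iso.refl _) rfl)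

end Spine

section InnerHorns

def RightCancellativeOnMonos (W : MorphismProperty SSet.{0}) : Prop :=
  ∀ {A B C : SSet.{0}} (i : A ⟶ B) (j : B ⟶ C),
    Mono i → Mono j → W i → W (i ≫ j) → W j

variable {W : MorphismProperty SSet.{0}} [W.IsMultiplicative] [W.IsStableUnderCobaseChange]

lemma horn_mem_of_genInnerHornsIn (hcancel : RightCancellativeOnMonos W) {n : ℕ}
    (hspine : W (spineInclusion n)) (hW : ∀ m < n, GenInnerHornsIn W m)
    {i : Fin (n + 1)} (hi : i ∈ innerVertices n) : W Λ[n, i].ι := by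
  obtain ⟨d, rfl⟩ : ∃ d, n = d + 2 := ⟨n - 2, by obtain ⟨h0, hn⟩ := hi; omega⟩
  have h₁ := inclusionIn_spanLE_one hW (k := d + 1) le_add_self (by omega)
  rw [spanLE_eq_genHorn] at h₁
  have h₂ := inclusionIn_genHorn_singleton (hW (d + 1) (by omega)) subset_rfl hi
  rw [← horn_eq_subcomplexOfFaces] at h₂
  obtain ⟨_, h⟩ := h₁.trans h₂
  have hsp := (inclusionIn_top_iff _).mp (spineInclusion_mem_iff.mp hspine)
  exact hcancel _ _ inferInstance inferInstance h (by rw [Subcomplex.homOfLE_ι]; exact hsp)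

lemma genInnerHornsIn_of_spineInclusion (hcancel : RightCancellativeOnMonos W)
    (hspine : ∀ n, W (spineInclusion n)) (m : ℕ) : GenInnerHornsIn W m := by
  induction m using Nat.strong_induction_on with
  | _ m ih =>
    cases m with
    | zero => exact genInnerHornsIn_zero
    | succ m => exact (ih m m.lt_succ_self).succ fun i hi =>
        horn_mem_of_genInnerHornsIn hcancel (hspine _) ih hi

end InnerHorns

theorem innerAnodyne_le_of_spine_general (M : MorphismProperty SSet.{0})
    (hsat : IsSaturated M)
    (hcancel : ∀ {A B C : SSet} (i : A ⟶ B) (j : B ⟶ C), Mono i → Mono j →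
      M i → M (i ≫ j) → M j)
    (hspine : ∀ n : ℕ, M (spineInclusion n)) :
    InnerAnodyne ≤ M := by
  have := hsat.isMultiplicative
  have := hsat.cobase
  refine hsat.saturation_le ?_
  rintro _ _ _ ⟨n, i, h0, hn, rfl, rfl, rfl⟩
  simpa using horn_mem_of_genInnerHornsIn hcancel (hspine n)
    (fun m _ => genInnerHornsIn_of_spineInclusion hcancel hspine m) ⟨h0, hn⟩

/-- a saturated class of monomorphisms with the right cancellation
property within monomorphisms which contains all spine inclusions contains all
inner anodyne maps. -/
theorem innerAnodyne_le_of_spine (M : MorphismProperty SSet.{0})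
    (hsat : IsSaturated M)
    (hmono : M ≤ MorphismProperty.monomorphisms SSet)
    (hcancel : ∀ {A B C : SSet} (i : A ⟶ B) (j : B ⟶ C), Mono i → Mono j →
      M i → M (i ≫ j) → M j)
    (hspine : ∀ n : ℕ, M (spineInclusion n)) :
    InnerAnodyne ≤ M :=
  innerAnodyne_le_of_spine_general M hsat hcancel hspine

end Paper
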